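/- Let a and b be distinct points on the unit circle in the Euclidean plane ℝ² (‖a‖ = ‖b‖ = 1), and let n be a unit vector orthogonal to b − a chosen outward, i.e., with ⟨n, a + b⟩ ≥ 0. Then every point x ≠ 0 on the closed segment joining a and b satisfies ‖n − x/‖x‖‖ ≤ ‖a − b‖. -/

import Mathlib

/-!
Put `c = ⟪n, a⟫ = ⟪n, b⟫ = ⟪n, x⟫`. In the plane `n` is parallel to `a + b`, which gives the
half-angle formula `⟪a, b⟫ = 2 c² - 1`, and the outward condition gives `0 ≤ c ≤ 1`. Hence
`⟪a, b⟫ ≤ c ≤ c / ‖x‖ = ⟪n, x / ‖x‖⟫`, and between unit vectors a larger inner product means a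
smaller distance.
-/

open Module
open scoped RealInnerProductSpace EuclideanSpace

section Plane

variable {E : Type*} [NormedAddCommGroup E] [InnerProductSpace ℝ E] [Fact (finrank ℝ E = 2)]

theorem inner_sq_eq_norm_sq_mul_norm_sq_of_inner_eq_zero {v x y : E} (hv : v ≠ 0)
    (hx : ⟪v, x⟫ = 0) (hy : ⟪v, y⟫ = 0) : ⟪x, y⟫ ^ 2 = ‖x‖ ^ 2 * ‖y‖ ^ 2 := by
  have : FiniteDimensional ℝ E := .of_fact_finrank_eq_two
  let o : Orientation ℝ E (Fin 2) := (finBasisOfFinrankEq ℝ E Fact.out).orientation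
  have hxy := o.inner_mul_inner_add_areaForm_mul_areaForm v x y
  have hxx := o.inner_sq_add_areaForm_sq v x
  have hyy := o.inner_sq_add_areaForm_sq v y
  rw [hx] at hxy hxx
  rw [hy] at hxy hyy
  have hv2 : (‖v‖ ^ 2) ^ 2 ≠ 0 := by positivity
  refine mul_left_cancel₀ hv2 ?_
  -- `ω v x * ω v y = ‖v‖² ⟪x, y⟫` and `(ω v x)² = ‖v‖² ‖x‖²`, likewise for `y`
  linear_combination (-(o.areaForm v x * o.areaForm v y + ‖v‖ ^ 2 * ⟪x, y⟫)) * hxy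
    + o.areaForm v y ^ 2 * hxx + ‖v‖ ^ 2 * ‖x‖ ^ 2 * hyy

theorem inner_eq_two_mul_inner_sq_sub_one_of_inner_sub_eq_zero {a b n : E} (ha : ‖a‖ = 1)
    (hb : ‖b‖ = 1) (hab : a ≠ b) (hn : ‖n‖ = 1) (horth : ⟪n, b - a⟫ = 0) :
    ⟪a, b⟫ = 2 * ⟪n, a⟫ ^ 2 - 1 := by
  have hna : ⟪n, b⟫ = ⟪n, a⟫ := by rwa [inner_sub_right, sub_eq_zero] at horth
  have hsum : ⟪b - a, b + a⟫ = 0 := by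
    rw [real_inner_comm, real_inner_add_sub_eq_zero_iff, ha, hb]
  have key := inner_sq_eq_norm_sq_mul_norm_sq_of_inner_eq_zero (sub_ne_zero.2 hab.symm)
    (real_inner_comm n _ ▸ horth) hsum
  rw [inner_add_right, hna, hn, norm_add_sq_real, ha, hb, real_inner_comm a b] at key
  linear_combination -key / 2

end Plane

section InnerProductSpace

variable {F : Type*} [NormedAddCommGroup F] [InnerProductSpace ℝ F]

theorem inner_eq_of_mem_segment {n a b x : F} (h : ⟪n, a⟫ = ⟪n, b⟫) (hx : x ∈ segment ℝ a b) :
    ⟪n, x⟫ = ⟪n, a⟫ :=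
  (convex_hyperplane (innerₛₗ ℝ n).isLinear ⟪n, a⟫).segment_subset rfl h.symm hx

theorem norm_sub_le_norm_sub_of_inner_le {a b u v : F} (ha : ‖a‖ = 1) (hb : ‖b‖ = 1)
    (hu : ‖u‖ = 1) (hv : ‖v‖ = 1) (h : ⟪a, b⟫ ≤ ⟪u, v⟫) : ‖u - v‖ ≤ ‖a - b‖ := by
  refine (sq_le_sq₀ (norm_nonneg _) (norm_nonneg _)).1 ?_
  rw [norm_sub_sq_real, norm_sub_sq_real, ha, hb, hu, hv]
  linarith

theorem norm_le_one_of_mem_segment {a b x : F} (ha : ‖a‖ = 1) (hb : ‖b‖ = 1)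
    (hx : x ∈ segment ℝ a b) : ‖x‖ ≤ 1 := by
  simpa using (convex_closedBall (0 : F) 1).segment_subset (by simp [ha]) (by simp [hb]) hx

end InnerProductSpace

/-- Normal-vector boundary-skin estimate for a chord of the unit circle: if `a ≠ b`
lie on the unit circle in `ℝ²` and `n` is the outward unit normal of the chord
(`n ⟂ b - a`, `⟪n, a + b⟫ ≥ 0`), then for every `x ≠ 0` on the segment `[a, b]`,
`‖n - x/‖x‖‖ ≤ ‖a - b‖`. -/
theorem chord_normal_estimate
    (a b : EuclideanSpace ℝ (Fin 2)) (ha : ‖a‖ = 1) (hb : ‖b‖ = 1) (hab : a ≠ b)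
    (n : EuclideanSpace ℝ (Fin 2)) (hn : ‖n‖ = 1)
    (horth : ⟪n, b - a⟫ = 0) (hout : 0 ≤ ⟪n, a + b⟫) :
    ∀ x ∈ segment ℝ a b, x ≠ 0 → ‖n - ‖x‖⁻¹ • x‖ ≤ ‖a - b‖ := by
  intro x hx hx0
  have hna : ⟪n, a⟫ = ⟪n, b⟫ := by rw [inner_sub_right, sub_eq_zero] at horth; exact horth.symm
  have hc_nonneg : 0 ≤ ⟪n, a⟫ := by rw [inner_add_right, ← hna] at hout; linarith
  have hc_le_one : ⟪n, a⟫ ≤ 1 := by simpa [hn, ha] using real_inner_le_norm n a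
  have hx_pos : 0 < ‖x‖ := norm_pos_iff.2 hx0
  have hx_le : ‖x‖ ≤ 1 := norm_le_one_of_mem_segment ha hb hx
  refine norm_sub_le_norm_sub_of_inner_le ha hb hn (norm_smul_inv_norm hx0) ?_
  rw [real_inner_smul_right, inner_eq_of_mem_segment hna hx,
    inner_eq_two_mul_inner_sq_sub_one_of_inner_sub_eq_zero ha hb hab hn horth]
  calc 2 * ⟪n, a⟫ ^ 2 - 1 ≤ ⟪n, a⟫ := by nlinarith
    _ ≤ ‖x‖⁻¹ * ⟪n, a⟫ := le_mul_of_one_le_left hc_nonneg ((one_le_inv₀ hx_pos).2 hx_le)
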